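/- Let h ∈ R^N, r > 0, and H a symmetric traceless N×N matrix. If (1/2)|h|²/r = (N/2) λ_max( (h ⊗ h)/r - H ), then H = (h ⊗ h)/r - (1/N)(|h|²/r) I. -/

import Mathlib

open Matrix

/-- largest eigenvalue of a real symmetric (Hermitian) matrix -/
noncomputable def lamMax {N : ℕ} {A : Matrix (Fin N) (Fin N) ℝ} (hA : A.IsHermitian) : ℝ :=
  ⨆ i, hA.eigenvalues i

theorem herm_smul {N : ℕ} (r : ℝ) {A : Matrix (Fin N) (Fin N) ℝ} (hA : A.IsHermitian) :
    (r • A).IsHermitian := by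
  ext i j
  have h2 := hA.apply i j
  simp only [star_trivial] at h2
  simp only [conjTranspose_apply, Matrix.smul_apply, star_trivial, smul_eq_mul]
  rw [← h2]

theorem herm_vmv {N : ℕ} (h : Fin N → ℝ) : (vecMulVec h h).IsHermitian := by
  ext i j
  simp [conjTranspose_apply, vecMulVec_apply, mul_comm]

/-!
The matrix `M = (h ⊗ h)/r - H` is symmetric with trace `|h|²/r`, the sum of its eigenvalues.
The hypothesis says this sum equals `N · λ_max(M)`, so every eigenvalue equals `λ_max(M)`;
by the spectral theorem `M` is then the scalar matrix `λ_max(M) · I = (|h|²/(N r)) · I`.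
-/

theorem Matrix.IsHermitian.eq_smul_one_of_eigenvalues_eq {𝕜 n : Type*} [RCLike 𝕜] [Fintype n]
    [DecidableEq n] {A : Matrix n n 𝕜} (hA : A.IsHermitian) {c : ℝ}
    (hc : ∀ i, hA.eigenvalues i = c) : A = (c : 𝕜) • 1 := by
  have hdiag : diagonal (RCLike.ofReal ∘ hA.eigenvalues) = (c : 𝕜) • (1 : Matrix n n 𝕜) := by
    rw [smul_one_eq_diagonal]
    congr 1
    ext i
    simp [hc i]
  rw [hA.spectral_theorem, hdiag, map_smul, map_one]

theorem eigenvalues_le_lamMax {N : ℕ} {A : Matrix (Fin N) (Fin N) ℝ} (hA : A.IsHermitian)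
    (i : Fin N) : hA.eigenvalues i ≤ lamMax hA :=
  le_ciSup (Set.finite_range _).bddAbove i

theorem eigenvalues_eq_lamMax_of_trace_eq {N : ℕ} {A : Matrix (Fin N) (Fin N) ℝ}
    (hA : A.IsHermitian) (htr : A.trace = N * lamMax hA) (i : Fin N) :
    hA.eigenvalues i = lamMax hA := by
  have hgaps : ∑ j, (lamMax hA - hA.eigenvalues j) = 0 := by
    have htr_sum : A.trace = ∑ j, hA.eigenvalues j := by simpa using hA.trace_eq_sum_eigenvalues
    rw [Finset.sum_sub_distrib, ← htr_sum, htr]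
    simp
  have := (Finset.sum_eq_zero_iff_of_nonneg fun j _ ↦ sub_nonneg.mpr
    (eigenvalues_le_lamMax hA j)).mp hgaps i (Finset.mem_univ i)
  linarith

theorem eq_trace_div_smul_one_of_trace_eq {N : ℕ} {A : Matrix (Fin N) (Fin N) ℝ}
    (hA : A.IsHermitian) (htr : A.trace = N * lamMax hA) :
    A = (A.trace / N) • 1 := by
  rcases N.eq_zero_or_pos with rfl | hN
  · exact Subsingleton.elim _ _
  have hlam : lamMax hA = A.trace / N := by
    rw [htr]
    field_simp
  simpa [hlam] using hA.eq_smul_one_of_eigenvalues_eq (eigenvalues_eq_lamMax_of_trace_eq hA htr)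

theorem equality_case_general {N : ℕ} (h : Fin N → ℝ) (r : ℝ)
    (H : Matrix (Fin N) (Fin N) ℝ) (hH : H.IsHermitian) (hHtr : H.trace = 0)
    (heq : (1 / 2) * (h ⬝ᵥ h) / r =
      ((N : ℝ) / 2) * lamMax ((herm_smul r⁻¹ (herm_vmv h)).sub hH)) :
    H = r⁻¹ • vecMulVec h h -
      ((1 / (N : ℝ)) * ((h ⬝ᵥ h) / r)) • (1 : Matrix (Fin N) (Fin N) ℝ) := by
  set hM := (herm_smul r⁻¹ (herm_vmv h)).sub hH
  have htrM : (r⁻¹ • vecMulVec h h - H).trace = (h ⬝ᵥ h) / r := by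
    rw [trace_sub, hHtr, sub_zero, trace_smul, trace_vecMulVec, smul_eq_mul, inv_mul_eq_div]
  have hM_eq := eq_trace_div_smul_one_of_trace_eq hM (by
    rw [htrM]
    linarith [mul_div_assoc (1 / 2 : ℝ) (h ⬝ᵥ h) r])
  rw [htrM, ← one_div_mul_eq_div] at hM_eq
  rw [← hM_eq, sub_sub_cancel]

theorem equality_case {N : ℕ} (hN : 0 < N) (h : Fin N → ℝ) (r : ℝ) (hr : 0 < r)
    (H : Matrix (Fin N) (Fin N) ℝ) (hH : H.IsHermitian) (hHtr : H.trace = 0)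
    (heq : (1 / 2) * (h ⬝ᵥ h) / r =
      ((N : ℝ) / 2) * lamMax ((herm_smul r⁻¹ (herm_vmv h)).sub hH)) :
    H = r⁻¹ • vecMulVec h h -
      ((1 / (N : ℝ)) * ((h ⬝ᵥ h) / r)) • (1 : Matrix (Fin N) (Fin N) ℝ) :=
  equality_case_general h r H hH hHtr heq
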